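/- arXiv:2503.18284 — 5 statements merged into one kernel-verified Lean document; each statement's English description precedes it below -/
import Mathlib

section
/- Let N ≥ 1 and K̄ ≥ 1 be natural numbers, K = N·K̄, and let a : Fin K → ℝ be monotone (a_i ≤ a_j whenever i ≤ j). Let C_1, …, C_N be a partition of Fin K into N pairwise disjoint sets, each of cardinality K̄. Then ∑_{n=1}^{N} max_{k ∈ C_n} a_k ≥ ∑_{j=1}^{N} a_{j·K̄ − 1} (indices 0-based, so a_{j·K̄ − 1} is the (j·K̄)-th smallest value). -/
open scoped Classical

/-- Lower-bound half of Theorem 1: for sorted values, any partition into N clusters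
of equal size Kb (= K̄) has sum of per-cluster maxima at least ∑_j a_{j·Kb - 1}. -/
theorem stmt_3 (N Kb : ℕ) (hN : 1 ≤ N) (hKb : 1 ≤ Kb)
    (a : Fin (N * Kb) → ℝ) (ha : Monotone a)
    (C : Fin N → Finset (Fin (N * Kb)))
    (hdisj : ∀ i j : Fin N, i ≠ j → Disjoint (C i) (C j))
    (hcard : ∀ n : Fin N, (C n).card = Kb)
    (hcover : ∀ k : Fin (N * Kb), ∃ n : Fin N, k ∈ C n) :
    ∑ j : Fin N, a ⟨j.val * Kb + (Kb - 1), by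
        have h1 : j.val + 1 ≤ N := j.isLt
        have h2 : (j.val + 1) * Kb ≤ N * Kb := Nat.mul_le_mul_right _ h1
        have h3 : (j.val + 1) * Kb = j.val * Kb + Kb := by ring
        omega⟩ ≤
      ∑ n : Fin N, (C n).sup' (Finset.card_pos.mp (by rw [hcard n]; omega)) a := by
  have hne : ∀ n : Fin N, (C n).Nonempty := fun n => Finset.card_pos.mp (by rw [hcard n]; omega)
  set e : Fin N → Fin (N * Kb) := fun n => (C n).max' (hne n) with he
  have hmem : ∀ n, e n ∈ C n := fun n => (C n).max'_mem (hne n)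
  have hinj : Function.Injective e := by
    intro i j hij
    by_contra hij'
    exact Finset.disjoint_left.mp (hdisj i j hij') (hmem i) (hij ▸ hmem j)
  set σ := Tuple.sort e with hσ
  have hm : Monotone (e ∘ σ) := Tuple.monotone_sort e
  have key : ∀ j : Fin N, j.val * Kb + (Kb - 1) ≤ (e (σ j)).val := by
    intro j
    have hsub : ((Finset.univ.filter (fun i : Fin N => i ≤ j)).biUnion fun i => C (σ i)) ⊆
        Finset.Iic (e (σ j)) := by
      intro x hx
      simp only [Finset.mem_biUnion, Finset.mem_filter] at hx
      obtain ⟨i, ⟨_, hij⟩, hxi⟩ := hx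
      have hx1 : x ≤ e (σ i) := (C (σ i)).le_max' x hxi
      exact Finset.mem_Iic.mpr (hx1.trans (hm hij))
    have hcard2 : ((Finset.univ.filter (fun i : Fin N => i ≤ j)).biUnion fun i => C (σ i)).card
        = (j.val + 1) * Kb := by
      rw [Finset.card_biUnion]
      · have hfil : Finset.univ.filter (fun i : Fin N => i ≤ j) = Finset.Iic j := by
          ext i; simp
        simp [hcard, hfil, Fin.card_Iic, mul_comm]
      · intro x _ y _ hxy
        exact hdisj _ _ (fun h => hxy (σ.injective h))
    have hle := Finset.card_le_card hsub
    rw [hcard2, Fin.card_Iic] at hle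
    have : (j.val + 1) * Kb = j.val * Kb + Kb := by ring
    omega
  have step1 : ∑ j : Fin N, a ⟨j.val * Kb + (Kb - 1), by
        have h2 : (j.val + 1) * Kb ≤ N * Kb := Nat.mul_le_mul_right _ j.isLt
        have h3 : (j.val + 1) * Kb = j.val * Kb + Kb := by ring
        omega⟩ ≤ ∑ j : Fin N, a (e (σ j)) := by
    refine Finset.sum_le_sum fun j _ => ha ?_
    exact key j
  have step2 : ∑ j : Fin N, a (e (σ j)) = ∑ n : Fin N, a (e n) :=
    Equiv.sum_comp σ (fun n => a (e n))
  have step3 : ∑ n : Fin N, a (e n) ≤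
      ∑ n : Fin N, (C n).sup' (Finset.card_pos.mp (by rw [hcard n]; omega)) a :=
    Finset.sum_le_sum fun n _ => Finset.le_sup' a (hmem n)
  linarith
end

section
/- Let N ≥ 1 and K̄ ≥ 1 be natural numbers, K = N·K̄, and let a : Fin K → ℝ be monotone (a_i ≤ a_j whenever i ≤ j). Let C_1, …, C_N be a partition of Fin K into N pairwise disjoint sets each of cardinality K̄. Then for every i with 1 ≤ i ≤ N, the number of clusters whose maximum is strictly less than a_{i·K̄ − 1} (0-based index) is at most i − 1; equivalently, at least N − i + 1 clusters C_n satisfy max_{k∈C_n} a_k ≥ a_{i·K̄ − 1}. -/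
open scoped Classical

/-! A cluster whose maximum is below `a m` lies, by monotonicity of `a`, inside `{k | k < m}`.
Disjoint clusters of size `K̄` each therefore number at most `m / K̄`, which is less than `i`
for `m = i·K̄ − 1`; the clusters with maximum at least `a m` are the remaining ones. -/

open Finset

theorem card_mul_le_card_Iio_of_forall_lt {ι α β : Type*} [LinearOrder α]
    [LocallyFiniteOrderBot α] [Preorder β] {a : α → β} (ha : Monotone a)
    {s : Finset ι} {C : ι → Finset α} (hdisj : (s : Set ι).PairwiseDisjoint C)
    {K : ℕ} (hcard : ∀ n ∈ s, #(C n) = K) {m : α}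
    (hlt : ∀ n ∈ s, ∀ k ∈ C n, a k < a m) :
    #s * K ≤ #(Iio m) := by
  have hunion : #(s.biUnion C) = #s * K := by
    rw [card_biUnion hdisj, sum_congr rfl hcard, sum_const, smul_eq_mul]
  have hsub : s.biUnion C ⊆ Iio m := by
    intro k hk
    obtain ⟨n, hn, hkn⟩ := mem_biUnion.mp hk
    exact mem_Iio.mpr (ha.reflect_lt (hlt n hn k hkn))
  exact hunion ▸ card_le_card hsub

/-- Counting step in the proof of Theorem 1: at most i - 1 clusters have maximum
strictly below the (i·Kb)-th smallest value; equivalently at least N - i + 1 clusters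
have maximum at least that value. -/
theorem stmt_5 (N Kb : ℕ) (hKb : 1 ≤ Kb)
    (a : Fin (N * Kb) → ℝ) (ha : Monotone a)
    (C : Fin N → Finset (Fin (N * Kb)))
    (hdisj : ∀ i j : Fin N, i ≠ j → Disjoint (C i) (C j))
    (hcard : ∀ n : Fin N, (C n).card = Kb)
    (i : ℕ) (hi1 : 1 ≤ i) (hiN : i ≤ N) :
    (Finset.univ.filter (fun n : Fin N =>
        (C n).sup' (Finset.card_pos.mp (by rw [hcard n]; omega)) a <
          a ⟨i * Kb - 1, by
            have h2 : i * Kb ≤ N * Kb := Nat.mul_le_mul_right _ hiN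
            have h3 : 1 * 1 ≤ i * Kb := Nat.mul_le_mul hi1 hKb
            omega⟩)).card ≤ i - 1 ∧
      N - i + 1 ≤ (Finset.univ.filter (fun n : Fin N =>
          a ⟨i * Kb - 1, by
            have h2 : i * Kb ≤ N * Kb := Nat.mul_le_mul_right _ hiN
            have h3 : 1 * 1 ≤ i * Kb := Nat.mul_le_mul hi1 hKb
            omega⟩ ≤
            (C n).sup' (Finset.card_pos.mp (by rw [hcard n]; omega)) a)).card := by
  set m : Fin (N * Kb) := ⟨i * Kb - 1, _⟩
  have hne (n : Fin N) : (C n).Nonempty := card_pos.mp (by rw [hcard n]; omega)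
  set top : Fin N → ℝ := fun n => (C n).sup' (hne n) a
  set below := univ.filter fun n => top n < a m
  have hbound : #below * Kb ≤ i * Kb - 1 := by
    have := card_mul_le_card_Iio_of_forall_lt ha (s := below)
      (fun x _ y _ hxy => hdisj x y hxy) (fun n _ => hcard n) (m := m)
      (fun n hn => (sup'_lt_iff _).mp (mem_filter.mp hn).2)
    rwa [Fin.card_Iio] at this
  have hbelow : #below ≤ i - 1 := by
    have hpos : 0 < i * Kb := Nat.mul_pos hi1 hKb
    have : #below < i := Nat.lt_of_mul_lt_mul_right (by omega : #below * Kb < i * Kb)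
    omega
  have hsplit : #below + #(univ.filter fun n => a m ≤ top n) = N := by
    simpa only [not_lt, card_univ, Fintype.card_fin] using
      card_filter_add_card_filter_not (s := univ) (p := fun n => top n < a m)
  exact ⟨hbelow, (by omega : N - i + 1 ≤ #(univ.filter fun n => a m ≤ top n))⟩
end

section
/- Let E be a real inner product space, F : E → ℝ, L > 0, μ > 0, F* ∈ ℝ, and Gf : E → E a map such that: (a) for all u, v ∈ E, F(u) ≤ F(v) + ⟪Gf(v), u − v⟫ + (L/2)·‖u − v‖² (smoothness); (b) for all w ∈ E, ‖Gf(w)‖² ≥ 2μ·(F(w) − F*) (Polyak–Łojasiewicz inequality); and (c) F(w) ≥ F* for all w. Fix w ∈ E, a finite set S, weights α : S → ℝ with α_k ≥ 0 and ∑_{k∈S} α_k ≤ 1, vectors g : S → E with ‖Gf(w) − g_k‖ ≤ δ_k, and η with 0 < η, L·η < 1, and μ·η ≤ 1. Let (Ω, μ₀) be a probability space and Z : Ω → E with ∫ Z dμ₀ = 0 and ∫ ‖Z‖² dμ₀ = σ₀² (with Z, ‖Z‖², and the composed loss integrable). Then ∫ F(w − η·∑_{k∈S} α_k g_k − η·Z(ω))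 dμ₀ − F* ≤ (1 − μ·η·∑_{k∈S} α_k)·(F(w) − F*) + C, where C = (η/2)·∑_{k∈S} α_k·δ_k² − ((η − Lη²)/2)·∑_{k∈S} α_k·‖g_k‖² + (L·η²/2)·σ₀². -/
open MeasureTheory
open scoped RealInnerProductSpace

/-- Per-round contraction in the proof of Theorem 3: combining the one-step bound
(Lemma 1) with the Polyak–Łojasiewicz inequality. -/
theorem stmt_12 {E : Type*} [NormedAddCommGroup E] [InnerProductSpace ℝ E] [CompleteSpace E]
    {Ω : Type*} {mΩ : MeasurableSpace Ω} (μ₀ : Measure Ω) [IsProbabilityMeasure μ₀]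
    (F : E → ℝ) (L μ : ℝ) (hL : 0 < L) (hμ : 0 < μ) (Fstar : ℝ) (Gf : E → E)
    (hsmooth : ∀ u v : E, F u ≤ F v + ⟪Gf v, u - v⟫ + L / 2 * ‖u - v‖ ^ 2)
    (hPL : ∀ w : E, 2 * μ * (F w - Fstar) ≤ ‖Gf w‖ ^ 2)
    (hmin : ∀ w : E, Fstar ≤ F w)
    (w : E) {ι : Type*} (S : Finset ι) (α : ι → ℝ)
    (hα0 : ∀ k ∈ S, 0 ≤ α k) (hα1 : ∑ k ∈ S, α k ≤ 1)
    (g : ι → E) (δ : ι → ℝ) (hδ : ∀ k ∈ S, ‖Gf w - g k‖ ≤ δ k)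
    (η : ℝ) (hη : 0 < η) (hLη : L * η < 1) (hμη : μ * η ≤ 1)
    (Z : Ω → E) (σ0sq : ℝ)
    (hZint : Integrable Z μ₀) (hZmean : ∫ ω, Z ω ∂μ₀ = 0)
    (hZsq : Integrable (fun ω => ‖Z ω‖ ^ 2) μ₀)
    (hZvar : ∫ ω, ‖Z ω‖ ^ 2 ∂μ₀ = σ0sq)
    (hFint : Integrable (fun ω => F (w - η • (∑ k ∈ S, α k • g k) - η • Z ω)) μ₀) :
    (∫ ω, F (w - η • (∑ k ∈ S, α k • g k) - η • Z ω) ∂μ₀) - Fstar ≤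
      (1 - μ * η * ∑ k ∈ S, α k) * (F w - Fstar)
        + ((η / 2) * ∑ k ∈ S, α k * δ k ^ 2
            - (η - L * η ^ 2) / 2 * ∑ k ∈ S, α k * ‖g k‖ ^ 2
            + L * η ^ 2 / 2 * σ0sq) := by
  set v : E := ∑ k ∈ S, α k • g k with hv_def
  set G : E := Gf w with hG_def
  set A : ℝ := ∑ k ∈ S, α k with hA_def
  have hA0 : (0:ℝ) ≤ A := Finset.sum_nonneg hα0
  have hSg0 : (0:ℝ) ≤ ∑ k ∈ S, α k * ‖g k‖ ^ 2 :=
    Finset.sum_nonneg fun k hk => mul_nonneg (hα0 k hk) (sq_nonneg _)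
  -- inner product bound
  have hGv : ⟪G, v⟫ = ∑ k ∈ S, α k * ⟪G, g k⟫ := by
    rw [hv_def, inner_sum]
    exact Finset.sum_congr rfl fun k hk => real_inner_smul_right _ _ _
  have h1 : -⟪G, v⟫ ≤ (∑ k ∈ S, α k * δ k ^ 2) / 2 - A * ‖G‖ ^ 2 / 2
      - (∑ k ∈ S, α k * ‖g k‖ ^ 2) / 2 := by
    have hk : ∀ k ∈ S, α k * ((‖G‖ ^ 2 + ‖g k‖ ^ 2 - δ k ^ 2) / 2) ≤ α k * ⟪G, g k⟫ := by
      intro k hk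
      have h2 : ‖G - g k‖ ^ 2 ≤ δ k ^ 2 := by
        have := hδ k hk
        nlinarith [norm_nonneg (G - g k)]
      have h3 : ‖G - g k‖ ^ 2 = ‖G‖ ^ 2 - 2 * ⟪G, g k⟫ + ‖g k‖ ^ 2 := by
        rw [norm_sub_sq_real]
      have : (‖G‖ ^ 2 + ‖g k‖ ^ 2 - δ k ^ 2) / 2 ≤ ⟪G, g k⟫ := by linarith
      exact mul_le_mul_of_nonneg_left this (hα0 k hk)
    have hsum := Finset.sum_le_sum hk
    rw [hGv]
    have e1 : ∑ k ∈ S, α k * ((‖G‖ ^ 2 + ‖g k‖ ^ 2 - δ k ^ 2) / 2)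
        = (∑ k ∈ S, (α k * ‖G‖ ^ 2 + α k * ‖g k‖ ^ 2 - α k * δ k ^ 2)) / 2 := by
      rw [Finset.sum_div]
      exact Finset.sum_congr rfl fun k _ => by ring
    have e2 : ∑ k ∈ S, (α k * ‖G‖ ^ 2 + α k * ‖g k‖ ^ 2 - α k * δ k ^ 2)
        = A * ‖G‖ ^ 2 + (∑ k ∈ S, α k * ‖g k‖ ^ 2) - ∑ k ∈ S, α k * δ k ^ 2 := by
      rw [Finset.sum_sub_distrib, Finset.sum_add_distrib, hA_def, Finset.sum_mul]
    linarith
  -- norm of v bound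
  have hvnorm : ‖v‖ ^ 2 ≤ ∑ k ∈ S, α k * ‖g k‖ ^ 2 := by
    have h4 : ‖v‖ ≤ ∑ k ∈ S, α k * ‖g k‖ := by
      rw [hv_def]
      refine (norm_sum_le _ _).trans (le_of_eq ?_)
      exact Finset.sum_congr rfl fun k hk => by
        rw [norm_smul, Real.norm_eq_abs, abs_of_nonneg (hα0 k hk)]
    have h5 : (∑ k ∈ S, α k * ‖g k‖) ^ 2 ≤ A * ∑ k ∈ S, α k * ‖g k‖ ^ 2 :=
      Finset.sum_sq_le_sum_mul_sum_of_sq_eq_mul S hα0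
        (fun k hk => mul_nonneg (hα0 k hk) (sq_nonneg _)) (fun k hk => by ring)
    have h6 : 0 ≤ ∑ k ∈ S, α k * ‖g k‖ :=
      Finset.sum_nonneg fun k hk => mul_nonneg (hα0 k hk) (norm_nonneg _)
    nlinarith [norm_nonneg v]
  -- pointwise smoothness bound
  have hpt : ∀ ω, F (w - η • v - η • Z ω) ≤
      (F w - η * ⟪G, v⟫ + L / 2 * η ^ 2 * ‖v‖ ^ 2)
        + (-η) * ⟪G, Z ω⟫ + (L * η ^ 2) * ⟪v, Z ω⟫ + (L / 2 * η ^ 2) * ‖Z ω‖ ^ 2 := by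
    intro ω
    have h := hsmooth (w - η • v - η • Z ω) w
    have hd : (w - η • v - η • Z ω) - w = (-η) • v + (-η) • Z ω := by module
    rw [hd] at h
    have hn : ‖(-η) • v + (-η) • Z ω‖ ^ 2
        = η ^ 2 * ‖v‖ ^ 2 + 2 * (η ^ 2 * ⟪v, Z ω⟫) + η ^ 2 * ‖Z ω‖ ^ 2 := by
      rw [norm_add_sq_real, real_inner_smul_left, real_inner_smul_right]
      simp only [norm_smul, Real.norm_eq_abs, mul_pow, sq_abs]
      ring
    have hi : ⟪G, (-η) • v + (-η) • Z ω⟫ = -(η * ⟪G, v⟫) + -(η * ⟪G, Z ω⟫) := by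
      rw [inner_add_right, real_inner_smul_right, real_inner_smul_right]
      ring
    rw [hn, hi] at h
    calc F (w - η • v - η • Z ω) ≤ _ := h
      _ = _ := by ring
  -- integrability
  have ia : Integrable (fun ω => (-η) * ⟪G, Z ω⟫) μ₀ := (hZint.const_inner G).const_mul _
  have ib : Integrable (fun ω => (L * η ^ 2) * ⟪v, Z ω⟫) μ₀ := (hZint.const_inner v).const_mul _
  have ic : Integrable (fun ω => (L / 2 * η ^ 2) * ‖Z ω‖ ^ 2) μ₀ := hZsq.const_mul _
  have iab : Integrable (fun ω => (F w - η * ⟪G, v⟫ + L / 2 * η ^ 2 * ‖v‖ ^ 2)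
      + (-η) * ⟪G, Z ω⟫) μ₀ := (integrable_const _).add ia
  have iabb : Integrable (fun ω => (F w - η * ⟪G, v⟫ + L / 2 * η ^ 2 * ‖v‖ ^ 2)
      + (-η) * ⟪G, Z ω⟫ + (L * η ^ 2) * ⟪v, Z ω⟫) μ₀ := iab.add ib
  have hRHSint : Integrable (fun ω =>
      (F w - η * ⟪G, v⟫ + L / 2 * η ^ 2 * ‖v‖ ^ 2)
        + (-η) * ⟪G, Z ω⟫ + (L * η ^ 2) * ⟪v, Z ω⟫ + (L / 2 * η ^ 2) * ‖Z ω‖ ^ 2) μ₀ :=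
    iabb.add ic
  have hIineq := integral_mono hFint hRHSint hpt
  have hIZ : ∫ ω, ⟪G, Z ω⟫ ∂μ₀ = 0 := by
    rw [integral_inner hZint, hZmean, inner_zero_right]
  have hIZ2 : ∫ ω, ⟪v, Z ω⟫ ∂μ₀ = 0 := by
    rw [integral_inner hZint, hZmean, inner_zero_right]
  have hIR : ∫ ω, ((F w - η * ⟪G, v⟫ + L / 2 * η ^ 2 * ‖v‖ ^ 2)
        + (-η) * ⟪G, Z ω⟫ + (L * η ^ 2) * ⟪v, Z ω⟫ + (L / 2 * η ^ 2) * ‖Z ω‖ ^ 2) ∂μ₀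
      = (F w - η * ⟪G, v⟫ + L / 2 * η ^ 2 * ‖v‖ ^ 2) + (L / 2 * η ^ 2) * σ0sq := by
    rw [integral_add iabb ic, integral_add iab ib, integral_add (integrable_const _) ia,
      integral_const_mul, integral_const_mul, integral_const_mul, hIZ, hIZ2, hZvar,
      integral_const]
    simp
  rw [hIR] at hIineq
  -- combine
  have hPLw := hPL w
  have hFw : 0 ≤ F w - Fstar := by linarith [hmin w]
  have t1 : η * (-⟪G, v⟫) ≤ η * ((∑ k ∈ S, α k * δ k ^ 2) / 2 - A * ‖G‖ ^ 2 / 2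
      - (∑ k ∈ S, α k * ‖g k‖ ^ 2) / 2) := mul_le_mul_of_nonneg_left h1 hη.le
  have t2 : (L / 2 * η ^ 2) * ‖v‖ ^ 2 ≤ (L / 2 * η ^ 2) * ∑ k ∈ S, α k * ‖g k‖ ^ 2 :=
    mul_le_mul_of_nonneg_left hvnorm (by positivity)
  have t3 : (η * A / 2) * (2 * μ * (F w - Fstar)) ≤ (η * A / 2) * ‖G‖ ^ 2 :=
    mul_le_mul_of_nonneg_left hPLw (by positivity)
  nlinarith [hIineq, t1, t2, t3]
end

section
/- Let E be a real inner product space, F : E → ℝ, L > 0, μ > 0, F* ∈ ℝ, and Gf : E → E a map such that for all u, v ∈ E, F(u) ≤ F(v) + ⟪Gf(v), u − v⟫ + (L/2)·‖u − v‖², for all w ∈ E, ‖Gf(w)‖² ≥ 2μ·(F(w) − F*), and F(w) ≥ F* for all w. Let η satisfy 0 < η, L·η < 1, and μ·η ≤ 1. Let T ≥ 1, and for each round m < T let S_m be a finite index set, α_m : S_m → ℝ with α_{m,k} ≥ 0 and ∑_{k∈S_m} α_{m,k} ≤ 1, δ : ℕ → ℝ, and g_m : S_m → E with ‖Gf(w_m)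 − g_{m,k}‖ ≤ δ_k, where the iterates are defined by w_{m+1} = w_m − η·∑_{k∈S_m} α_{m,k}·g_{m,k}. Then F(w_T) − F* ≤ (∏_{m=0}^{T−1} B_m)·(F(w_0) − F*) + ∑_{i=0}^{T−1} C_i·(∏_{j=i+1}^{T−1} B_j), where B_m = 1 − μη·∑_{k∈S_m} α_{m,k} and C_m = (η/2)·∑_{k∈S_m} α_{m,k}·δ_k² − ((η − Lη²)/2)·∑_{k∈S_m} α_{m,k}·‖g_{m,k}‖². -/
open scoped RealInnerProductSpace

/-- Theorem 3 (noiseless-trajectory form): optimality gap of FedSAC-based AirFL after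
T communication rounds. -/
theorem stmt_13 {E : Type*} [NormedAddCommGroup E] [InnerProductSpace ℝ E]
    (F : E → ℝ) (L μ : ℝ) (hL : 0 < L) (hμ : 0 < μ) (Fstar : ℝ) (Gf : E → E)
    (hsmooth : ∀ u v : E, F u ≤ F v + ⟪Gf v, u - v⟫ + L / 2 * ‖u - v‖ ^ 2)
    (hPL : ∀ w : E, 2 * μ * (F w - Fstar) ≤ ‖Gf w‖ ^ 2)
    (hmin : ∀ w : E, Fstar ≤ F w)
    (η : ℝ) (hη : 0 < η) (hLη : L * η < 1) (hμη : μ * η ≤ 1)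
    (T : ℕ) (hT : 1 ≤ T)
    (S : ℕ → Finset ℕ) (α : ℕ → ℕ → ℝ) (δ : ℕ → ℝ) (g : ℕ → ℕ → E) (w : ℕ → E)
    (hα0 : ∀ m < T, ∀ k ∈ S m, 0 ≤ α m k)
    (hα1 : ∀ m < T, ∑ k ∈ S m, α m k ≤ 1)
    (hδ : ∀ m < T, ∀ k ∈ S m, ‖Gf (w m) - g m k‖ ≤ δ k)
    (hw : ∀ m < T, w (m + 1) = w m - η • ∑ k ∈ S m, α m k • g m k) :
    F (w T) - Fstar ≤
      (∏ m ∈ Finset.range T, (1 - μ * η * ∑ k ∈ S m, α m k)) * (F (w 0) - Fstar)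
        + ∑ i ∈ Finset.range T,
            ((η / 2) * ∑ k ∈ S i, α i k * δ k ^ 2
              - (η - L * η ^ 2) / 2 * ∑ k ∈ S i, α i k * ‖g i k‖ ^ 2) *
            ∏ j ∈ Finset.Ico (i + 1) T, (1 - μ * η * ∑ k ∈ S j, α j k) := by
  let B : ℕ → ℝ := fun m => 1 - μ * η * ∑ k ∈ S m, α m k
  let C : ℕ → ℝ := fun m => (η / 2) * ∑ k ∈ S m, α m k * δ k ^ 2
      - (η - L * η ^ 2) / 2 * ∑ k ∈ S m, α m k * ‖g m k‖ ^ 2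
  have hBnn : ∀ m, m < T → 0 ≤ B m := by
    intro m hm
    have hA0 : 0 ≤ ∑ k ∈ S m, α m k := Finset.sum_nonneg fun k hk => hα0 m hm k hk
    have hA1 := hα1 m hm
    have h1 : μ * η * ∑ k ∈ S m, α m k ≤ μ * η * 1 :=
      mul_le_mul_of_nonneg_left hA1 (mul_pos hμ hη).le
    simp only [B]
    nlinarith
  have key : ∀ m, m < T → F (w (m + 1)) - Fstar ≤ B m * (F (w m) - Fstar) + C m := by
    intro m hm
    set A := ∑ k ∈ S m, α m k with hA
    set G := Gf (w m) with hG
    set d := ∑ k ∈ S m, α m k • g m k with hd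
    set P := ∑ k ∈ S m, α m k * ‖g m k‖ ^ 2 with hP
    set D := ∑ k ∈ S m, α m k * δ k ^ 2 with hD
    have hA0 : 0 ≤ A := Finset.sum_nonneg fun k hk => hα0 m hm k hk
    have hA1 := hα1 m hm
    have hPnn : 0 ≤ P := Finset.sum_nonneg fun k hk => mul_nonneg (hα0 m hm k hk) (sq_nonneg _)
    have hdiff : w (m + 1) - w m = -(η • d) := by rw [hw m hm]; abel
    -- smoothness step
    have hs := hsmooth (w (m + 1)) (w m)
    have hinner : ⟪G, w (m + 1) - w m⟫ = -(η * ∑ k ∈ S m, α m k * ⟪G, g m k⟫) := by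
      rw [hdiff, inner_neg_right, real_inner_smul_right, hd, inner_sum]
      simp only [real_inner_smul_right]
    have hnorm : ‖w (m + 1) - w m‖ ^ 2 = η ^ 2 * ‖d‖ ^ 2 := by
      rw [hdiff, norm_neg, norm_smul, Real.norm_eq_abs, abs_of_pos hη, mul_pow]
    -- lower bound on inner sum
    have hGk : ∀ k ∈ S m, (‖G‖ ^ 2 + ‖g m k‖ ^ 2 - δ k ^ 2) / 2 ≤ ⟪G, g m k⟫ := by
      intro k hk
      have h1 := hδ m hm k hk
      have h2 : ‖G - g m k‖ ^ 2 ≤ δ k ^ 2 := by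
        nlinarith [norm_nonneg (G - g m k)]
      have h3 : ‖G - g m k‖ ^ 2 = ‖G‖ ^ 2 - 2 * ⟪G, g m k⟫ + ‖g m k‖ ^ 2 :=
        norm_sub_sq_real G (g m k)
      linarith
    have hsumInner : (A * ‖G‖ ^ 2 + P - D) / 2 ≤ ∑ k ∈ S m, α m k * ⟪G, g m k⟫ := by
      have h1 : ∑ k ∈ S m, α m k * ((‖G‖ ^ 2 + ‖g m k‖ ^ 2 - δ k ^ 2) / 2)
          ≤ ∑ k ∈ S m, α m k * ⟪G, g m k⟫ :=
        Finset.sum_le_sum fun k hk =>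
          mul_le_mul_of_nonneg_left (hGk k hk) (hα0 m hm k hk)
      have h2 : ∑ k ∈ S m, α m k * ((‖G‖ ^ 2 + ‖g m k‖ ^ 2 - δ k ^ 2) / 2)
          = (A * ‖G‖ ^ 2 + P - D) / 2 := by
        rw [hA, hP, hD, Finset.sum_mul, ← Finset.sum_add_distrib,
          ← Finset.sum_sub_distrib, Finset.sum_div]
        exact Finset.sum_congr rfl fun k hk => by ring
      linarith
    -- Cauchy-Schwarz bound on ‖d‖²
    have hdle : ‖d‖ ≤ ∑ k ∈ S m, α m k * ‖g m k‖ := by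
      refine (norm_sum_le _ _).trans_eq ?_
      exact Finset.sum_congr rfl fun k hk => by
        rw [norm_smul, Real.norm_eq_abs, abs_of_nonneg (hα0 m hm k hk)]
    have hCS : (∑ k ∈ S m, α m k * ‖g m k‖) ^ 2 ≤ A * P := by
      have h := Finset.sum_mul_sq_le_sq_mul_sq (S m)
        (fun k => Real.sqrt (α m k)) (fun k => Real.sqrt (α m k) * ‖g m k‖)
      have e1 : ∀ k ∈ S m, Real.sqrt (α m k) * (Real.sqrt (α m k) * ‖g m k‖)
          = α m k * ‖g m k‖ := fun k hk => by
        rw [← mul_assoc, Real.mul_self_sqrt (hα0 m hm k hk)]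
      have e2 : ∀ k ∈ S m, Real.sqrt (α m k) ^ 2 = α m k := fun k hk =>
        Real.sq_sqrt (hα0 m hm k hk)
      have e3 : ∀ k ∈ S m, (Real.sqrt (α m k) * ‖g m k‖) ^ 2 = α m k * ‖g m k‖ ^ 2 :=
        fun k hk => by rw [mul_pow, Real.sq_sqrt (hα0 m hm k hk)]
      rwa [Finset.sum_congr rfl e1, Finset.sum_congr rfl e2, Finset.sum_congr rfl e3] at h
    have hd2 : ‖d‖ ^ 2 ≤ P := by
      have h1 : ‖d‖ ^ 2 ≤ (∑ k ∈ S m, α m k * ‖g m k‖) ^ 2 := by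
        have hnn : (0:ℝ) ≤ ∑ k ∈ S m, α m k * ‖g m k‖ :=
          (norm_nonneg d).trans hdle
        nlinarith [norm_nonneg d]
      have h2 : A * P ≤ P := by nlinarith
      linarith
    -- combine
    rw [hinner, hnorm] at hs
    have h1' : η * ((A * ‖G‖ ^ 2 + P - D) / 2) ≤ η * ∑ k ∈ S m, α m k * ⟪G, g m k⟫ :=
      mul_le_mul_of_nonneg_left hsumInner hη.le
    have h2' : L / 2 * (η ^ 2 * ‖d‖ ^ 2) ≤ L / 2 * (η ^ 2 * P) :=
      mul_le_mul_of_nonneg_left (mul_le_mul_of_nonneg_left hd2 (sq_nonneg η))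
        (by linarith : (0:ℝ) ≤ L / 2)
    have hstep2 : η * A / 2 * (2 * μ * (F (w m) - Fstar)) ≤ η * A / 2 * ‖G‖ ^ 2 :=
      mul_le_mul_of_nonneg_left (hPL (w m))
        (div_nonneg (mul_nonneg hη.le hA0) (by norm_num))
    simp only [B, C]
    rw [← hA, ← hP, ← hD]
    linarith [hs, h1', h2', hstep2]
  -- induction
  have main : ∀ t, t ≤ T → F (w t) - Fstar ≤
      (∏ m ∈ Finset.range t, B m) * (F (w 0) - Fstar)
        + ∑ i ∈ Finset.range t, C i * ∏ j ∈ Finset.Ico (i + 1) t, B j := by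
    intro t
    induction t with
    | zero => simp
    | succ n ih =>
      intro hn
      have hnT : n < T := hn
      have h1 := key n hnT
      have h2 := ih hnT.le
      have hB := hBnn n hnT
      have h3 : B n * (F (w n) - Fstar) ≤
          B n * ((∏ m ∈ Finset.range n, B m) * (F (w 0) - Fstar)
            + ∑ i ∈ Finset.range n, C i * ∏ j ∈ Finset.Ico (i + 1) n, B j) :=
        mul_le_mul_of_nonneg_left h2 hB
      have hsum : ∑ i ∈ Finset.range (n + 1), C i * ∏ j ∈ Finset.Ico (i + 1) (n + 1), B j
          = (∑ i ∈ Finset.range n, C i * ∏ j ∈ Finset.Ico (i + 1) n, B j) * B n + C n := by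
        rw [Finset.sum_range_succ, Finset.Ico_self, Finset.prod_empty, mul_one,
          Finset.sum_mul]
        congr 1
        refine Finset.sum_congr rfl fun i hi => ?_
        rw [Finset.prod_Ico_succ_top (Nat.succ_le_of_lt (Finset.mem_range.mp hi))]
        ring
      rw [Finset.prod_range_succ, hsum]
      linarith [h1, h3]
  have h := main T le_rfl
  simp only [B, C] at h
  exact h
end

section
/- Let E be a real inner product space, w ∈ E, S a finite index set, weights α : S → ℝ with α_k ≥ 0 and ∑_{k∈S} α_k ≤ 1, vectors g : S → E with ‖u − g_k‖ ≤ δ_k for all k ∈ S where u ∈ E, and step size η with 0 < η and L·η ≤ 1 for some L > 0. Then −η·∑_{k∈S} α_k·⟪u, g_k⟫ + (L·η²/2)·‖∑_{k∈S} α_k g_k‖² ≤ −(η/2)·(∑_{k∈S} α_k)·‖u‖² − ((η − Lη²)/2)·∑_{k∈S} α_k·‖g_k‖² + (η/2)·∑_{k∈S} α_k·δ_k². -/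
open scoped RealInnerProductSpace

/-- Combined bound A₁ + A₂ in the proof of Lemma 1. -/
theorem stmt_16 {E : Type*} [NormedAddCommGroup E] [InnerProductSpace ℝ E]
    (w : E) {ι : Type*} (S : Finset ι) (α : ι → ℝ)
    (hα0 : ∀ k ∈ S, 0 ≤ α k) (hα1 : ∑ k ∈ S, α k ≤ 1)
    (u : E) (g : ι → E) (δ : ι → ℝ) (hδ : ∀ k ∈ S, ‖u - g k‖ ≤ δ k)
    (η L : ℝ) (hη : 0 < η) (hL : 0 < L) (hLη : L * η ≤ 1) :
    -η * (∑ k ∈ S, α k * ⟪u, g k⟫) + L * η ^ 2 / 2 * ‖∑ k ∈ S, α k • g k‖ ^ 2 ≤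
      -(η / 2) * (∑ k ∈ S, α k) * ‖u‖ ^ 2
        - (η - L * η ^ 2) / 2 * ∑ k ∈ S, α k * ‖g k‖ ^ 2
        + η / 2 * ∑ k ∈ S, α k * δ k ^ 2 := by
  -- Jensen: ‖∑ α_k g_k‖² ≤ ∑ α_k ‖g_k‖²
  have hsum_nonneg : 0 ≤ ∑ k ∈ S, α k * ‖g k‖ ^ 2 :=
    Finset.sum_nonneg fun k hk => mul_nonneg (hα0 k hk) (sq_nonneg _)
  have hnorm : ‖∑ k ∈ S, α k • g k‖ ≤ ∑ k ∈ S, α k * ‖g k‖ := by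
    refine (norm_sum_le _ _).trans_eq (Finset.sum_congr rfl fun k hk => ?_)
    rw [norm_smul, Real.norm_eq_abs, abs_of_nonneg (hα0 k hk)]
  have hCS : (∑ k ∈ S, α k * ‖g k‖) ^ 2 ≤
      (∑ k ∈ S, α k) * ∑ k ∈ S, α k * ‖g k‖ ^ 2 := by
    have := Finset.sum_mul_sq_le_sq_mul_sq S (fun k => Real.sqrt (α k))
      (fun k => Real.sqrt (α k) * ‖g k‖)
    calc (∑ k ∈ S, α k * ‖g k‖) ^ 2
        = (∑ k ∈ S, Real.sqrt (α k) * (Real.sqrt (α k) * ‖g k‖)) ^ 2 := by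
          congr 1
          refine Finset.sum_congr rfl fun k hk => ?_
          rw [← mul_assoc, Real.mul_self_sqrt (hα0 k hk)]
      _ ≤ (∑ k ∈ S, Real.sqrt (α k) ^ 2) * ∑ k ∈ S, (Real.sqrt (α k) * ‖g k‖) ^ 2 := this
      _ = (∑ k ∈ S, α k) * ∑ k ∈ S, α k * ‖g k‖ ^ 2 := by
          congr 1
          · exact Finset.sum_congr rfl fun k hk => Real.sq_sqrt (hα0 k hk)
          · refine Finset.sum_congr rfl fun k hk => ?_
            rw [mul_pow, Real.sq_sqrt (hα0 k hk)]
  have hJ : ‖∑ k ∈ S, α k • g k‖ ^ 2 ≤ ∑ k ∈ S, α k * ‖g k‖ ^ 2 := by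
    have h1 : ‖∑ k ∈ S, α k • g k‖ ^ 2 ≤ (∑ k ∈ S, α k * ‖g k‖) ^ 2 :=
      pow_le_pow_left₀ (norm_nonneg _) hnorm 2
    have h2 : (∑ k ∈ S, α k) * (∑ k ∈ S, α k * ‖g k‖ ^ 2) ≤
        1 * (∑ k ∈ S, α k * ‖g k‖ ^ 2) :=
      mul_le_mul_of_nonneg_right hα1 hsum_nonneg
    linarith
  -- polarization
  have hpol : ∑ k ∈ S, α k * ⟪u, g k⟫ =
      ((∑ k ∈ S, α k) * ‖u‖ ^ 2 + ∑ k ∈ S, α k * ‖g k‖ ^ 2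
        - ∑ k ∈ S, α k * ‖u - g k‖ ^ 2) / 2 := by
    rw [Finset.sum_mul, ← Finset.sum_add_distrib, ← Finset.sum_sub_distrib,
      Finset.sum_div]
    refine Finset.sum_congr rfl fun k hk => ?_
    rw [norm_sub_sq_real u (g k)]
    ring
  have hδ2 : ∑ k ∈ S, α k * ‖u - g k‖ ^ 2 ≤ ∑ k ∈ S, α k * δ k ^ 2 := by
    refine Finset.sum_le_sum fun k hk => ?_
    exact mul_le_mul_of_nonneg_left
      (pow_le_pow_left₀ (norm_nonneg _) (hδ k hk) 2) (hα0 k hk)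
  have hLη2 : 0 ≤ L * η ^ 2 := by positivity
  nlinarith [mul_le_mul_of_nonneg_left hJ (le_of_lt (by positivity : (0:ℝ) < L * η ^ 2 / 2)),
    mul_le_mul_of_nonneg_left hδ2 (le_of_lt (by positivity : (0:ℝ) < η / 2))]
end
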